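/- arXiv:math/0612643 — 2 statements merged into one kernel-verified Lean document; each statement's English description precedes it below -/
import Mathlib

section
/- Let (a,b,c,d) ∈ P. For all functions f, g : ℝ_q → ℂ and all integers k ≤ l and n ≤ m, the truncated inner products satisfy ⟨Lf, g⟩_{k,l;m,n} − ⟨f, Lg⟩_{k,l;m,n} = D(f, conj(g))(z₋q^l) − D(f, conj(g))(z₋q^{k−1}) + D(f, conj(g))(z₊q^{n−1}) − D(f, conj(g))(z₊q^m), where conj(g) denotes the pointwise complex conjugate of g. -/
open Complex Filter

noncomputable section

namespace VVBQJ

/-- The infinite q-shifted factorial `(x;q)_∞`. -/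
def poch (q x : ℂ) : ℂ := ∏' j : ℕ, (1 - x * q ^ j)

/-- The q-shifted factorial `(x;q)_n`, `n ∈ ℕ`. -/
def pochN (q x : ℂ) (n : ℕ) : ℂ := ∏ j ∈ Finset.range n, (1 - x * q ^ j)

/-- The normalized Jacobi theta function `θ(x) = (x;q)_∞ (q/x;q)_∞`. -/
def theta (q x : ℂ) : ℂ := poch q x * poch q (q / x)

/-- The condition on the pairs `(a,b)` and `(c,d)` in the parameter set `P`. -/
def pairCond (q zm zp : ℝ) (α β : ℂ) : Prop :=
  α = (starRingEnd ℂ) β ∨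
    (∃ (A B : ℝ) (k₀ : ℤ), α = (A : ℂ) ∧ β = (B : ℂ) ∧
      zp * q ^ k₀ < 1 / B ∧ 1 / B < 1 / A ∧ 1 / A < zp * q ^ (k₀ - 1)) ∨
    (∃ (A B : ℝ) (k₀ : ℤ), α = (A : ℂ) ∧ β = (B : ℂ) ∧
      zm * q ^ (k₀ - 1) < 1 / A ∧ 1 / A < 1 / B ∧ 1 / B < zm * q ^ k₀)

/-- The parameter domain `P`. -/
def memP (q zm zp : ℝ) (a b c d : ℂ) : Prop :=
  a ≠ 0 ∧ b ≠ 0 ∧ c ≠ 0 ∧ d ≠ 0 ∧ a ≠ b ∧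
    (∀ x ∈ ({a, b, c, d} : Set ℂ), ∀ k : ℤ,
      x ≠ ((zp : ℂ))⁻¹ * (q : ℂ) ^ k ∧ x ≠ ((zm : ℂ))⁻¹ * (q : ℂ) ^ k) ∧
    pairCond q zm zp a b ∧ pairCond q zm zp c d

/-- The generic parameter domain `P_gen`. -/
def memPgen (q zm zp : ℝ) (a b c d : ℂ) : Prop :=
  memP q zm zp a b c d ∧ c ≠ d ∧
    ∀ k : ℤ, c / a ≠ (q : ℂ) ^ k ∧ c / b ≠ (q : ℂ) ^ k ∧ d / a ≠ (q : ℂ) ^ k ∧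
      d / b ≠ (q : ℂ) ^ k ∧ c * d / (a * b) ≠ (q : ℂ) ^ k

/-- `s = √(cdq/(ab))`, with the principal branch of the square root. -/
def sP (q : ℝ) (a b c d : ℂ) : ℂ := (c * d * (q : ℂ) / (a * b)) ^ ((1 : ℂ) / 2)

def Acoef (q : ℝ) (a b c d : ℂ) (x : ℝ) : ℂ :=
  (sP q a b c d)⁻¹ * (1 - (q : ℂ) / (a * (x : ℂ))) * (1 - (q : ℂ) / (b * (x : ℂ)))

def Bcoef (q : ℝ) (a b c d : ℂ) (x : ℝ) : ℂ :=
  sP q a b c d * (1 - 1 / (c * (x : ℂ))) * (1 - 1 / (d * (x : ℂ)))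

def Ccoef (q : ℝ) (a b c d : ℂ) (x : ℝ) : ℂ :=
  sP q a b c d + (sP q a b c d)⁻¹ - Acoef q a b c d x - Bcoef q a b c d x

/-- The second order q-difference operator `L`. -/
def Lop (q : ℝ) (a b c d : ℂ) (f : ℝ → ℂ) (x : ℝ) : ℂ :=
  Acoef q a b c d x * f (x / q) + Bcoef q a b c d x * f (q * x) + Ccoef q a b c d x * f x

/-- The weight function `w`. -/
def w (q : ℝ) (a b c d : ℂ) (x : ℝ) : ℂ :=
  poch q (a * (x : ℂ)) * poch q (b * (x : ℂ)) / (poch q (c * (x : ℂ)) * poch q (d * (x : ℂ)))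

/-- The function `u(x) = (1-q)² B(x) x² w(x)`. -/
def u (q : ℝ) (a b c d : ℂ) (x : ℝ) : ℂ :=
  (1 - (q : ℂ)) ^ 2 * Bcoef q a b c d x * (x : ℂ) ^ 2 * w q a b c d x

/-- The Casorati determinant `D(f,g)`. -/
def casD (q : ℝ) (a b c d : ℂ) (f g : ℝ → ℂ) (x : ℝ) : ℂ :=
  (f x * g (q * x) - f (q * x) * g x) * u q a b c d x / ((1 - (q : ℂ)) * (x : ℂ))

/-- The truncated inner product `⟨f,g⟩_{k,l;m,n}`. -/
def trunc (q zm zp : ℝ) (a b c d : ℂ) (f g : ℝ → ℂ) (k l m n : ℤ) : ℂ :=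
  (1 - (q : ℂ)) *
    ((∑ j ∈ Finset.Icc n m, f (zp * q ^ j) * (starRingEnd ℂ) (g (zp * q ^ j)) *
        w q a b c d (zp * q ^ j) * ((zp * q ^ j : ℝ) : ℂ)) -
      ∑ j ∈ Finset.Icc k l, f (zm * q ^ j) * (starRingEnd ℂ) (g (zm * q ^ j)) *
        w q a b c d (zm * q ^ j) * ((zm * q ^ j : ℝ) : ℂ))

/-- The constant `K_z`. -/
def Kz (q : ℝ) (a b c d : ℂ) (z : ℝ) : ℂ :=
  (z : ℂ) * (1 - (q : ℂ)) * (theta q (a * z) * theta q (b * z)) /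
    (theta q (c * z) * theta q (d * z))

/-- Membership in the Hilbert space `ℒ²(ℝ_q, w(x) d_q x)`. -/
def memL2 (q zm zp : ℝ) (a b c d : ℂ) (f : ℝ → ℂ) : Prop :=
  Summable (fun k : ℤ => ‖f (zp * q ^ k)‖ ^ 2 * ‖w q a b c d (zp * q ^ k)‖ * |zp * q ^ k|) ∧
    Summable (fun k : ℤ => ‖f (zm * q ^ k)‖ ^ 2 * ‖w q a b c d (zm * q ^ k)‖ * |zm * q ^ k|)

/-- The inner product on `ℒ²`. -/
def innerL2 (q zm zp : ℝ) (a b c d : ℂ) (f g : ℝ → ℂ) : ℂ :=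
  (1 - (q : ℂ)) *
    ((∑' k : ℤ, f (zp * q ^ k) * (starRingEnd ℂ) (g (zp * q ^ k)) *
        w q a b c d (zp * q ^ k) * ((zp * q ^ k : ℝ) : ℂ)) -
      ∑' k : ℤ, f (zm * q ^ k) * (starRingEnd ℂ) (g (zm * q ^ k)) *
        w q a b c d (zm * q ^ k) * ((zm * q ^ k : ℝ) : ℂ))

/-- The squared `ℒ²`-norm. -/
def normSqL2 (q zm zp : ℝ) (a b c d : ℂ) (f : ℝ → ℂ) : ℝ :=
  (1 - q) *
    ((∑' k : ℤ, ‖f (zp * q ^ k)‖ ^ 2 * ‖w q a b c d (zp * q ^ k)‖ * (zp * q ^ k)) +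
      ∑' k : ℤ, ‖f (zm * q ^ k)‖ ^ 2 * ‖w q a b c d (zm * q ^ k)‖ * (-(zm * q ^ k)))

/-- The q-difference operator `D_q`. -/
def Dq (q : ℝ) (f : ℝ → ℂ) (x : ℝ) : ℂ := (f x - f (q * x)) / ((1 - (q : ℂ)) * (x : ℂ))

/-- The q-line `ℝ_q`. -/
def Rq (q zm zp : ℝ) : Set ℝ := {x | ∃ k : ℤ, x = zm * q ^ k ∨ x = zp * q ^ k}

/-- Membership in the domain `𝒟`. -/
def memD (q zm zp : ℝ) (a b c d : ℂ) (f : ℝ → ℂ) : Prop :=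
  memL2 q zm zp a b c d f ∧ memL2 q zm zp a b c d (Lop q a b c d f) ∧
    (∃ v : ℂ, Tendsto (fun k : ℕ => f (zm * q ^ k)) atTop (nhds v) ∧
        Tendsto (fun k : ℕ => f (zp * q ^ k)) atTop (nhds v)) ∧
    (∃ v : ℂ, Tendsto (fun k : ℕ => Dq q f (zm * q ^ k)) atTop (nhds v) ∧
        Tendsto (fun k : ℕ => Dq q f (zp * q ^ k)) atTop (nhds v))

/-- Membership in the eigenspace `V_μ` (functions on `ℝ_q`). -/
def memV (q zm zp : ℝ) (a b c d : ℂ) (μ : ℂ) (f : ℝ → ℂ) : Prop :=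
  (∀ x ∈ Rq q zm zp, Lop q a b c d f x = μ * f x) ∧
    (∃ v : ℂ, Tendsto (fun k : ℕ => f (zm * q ^ k)) atTop (nhds v) ∧
        Tendsto (fun k : ℕ => f (zp * q ^ k)) atTop (nhds v)) ∧
    (∃ v : ℂ, Tendsto (fun k : ℕ => Dq q f (zm * q ^ k)) atTop (nhds v) ∧
        Tendsto (fun k : ℕ => Dq q f (zp * q ^ k)) atTop (nhds v))

/-- The set of regular spectral values `S_reg = ℂ* \ {± q^{k/2}}`. -/
def Sreg (q : ℝ) (γ : ℂ) : Prop :=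
  γ ≠ 0 ∧ ∀ k : ℤ, γ ≠ ((q ^ ((k : ℝ) / 2) : ℝ) : ℂ) ∧ γ ≠ -((q ^ ((k : ℝ) / 2) : ℝ) : ℂ)

/-- The big q-Jacobi function `φ_γ(x)`. -/
def phi (q : ℝ) (a b c d : ℂ) (γ x : ℂ) : ℂ :=
  ∑' n : ℕ,
    pochN q (q / (a * x)) n * pochN q (sP q a b c d * γ) n * pochN q (sP q a b c d / γ) n /
      (pochN q q n * pochN q (c * q / a) n * pochN q (d * q / a) n) * (b * x) ^ n

/-- The asymptotic solution `Φ_γ(z q^{-k})`, in index form. -/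
def PhiIdx (q : ℝ) (a b c d : ℂ) (γ : ℂ) (z : ℝ) (k : ℤ) : ℂ :=
  let s : ℂ := sP q a b c d
  let x : ℂ := (z : ℂ) * (q : ℂ) ^ (-k)
  (s * γ) ^ k *
    (poch q ((q : ℂ) / (b * x)) * poch q ((q : ℂ) ^ 2 * γ / (a * s * x)) /
      (poch q ((q : ℂ) / (c * x)) * poch q ((q : ℂ) / (d * x)))) *
    ∑' n : ℕ,
      pochN q ((q : ℂ) * γ / s) n * pochN q (c * q * γ / (s * a)) n *
          pochN q (d * q * γ / (s * a)) n /
        (pochN q q n * pochN q ((q : ℂ) ^ 2 * γ / (a * s * x)) n * pochN q ((q : ℂ) * γ ^ 2) n) *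
        ((q : ℂ) / (b * x)) ^ n

/-- Casorati determinant at `x = z q^{-k}` for index-form functions. -/
def casDIdx (q : ℝ) (a b c d : ℂ) (f g : ℤ → ℂ) (z : ℝ) (k : ℤ) : ℂ :=
  (f k * g (k - 1) - f (k - 1) * g k) * u q a b c d (z * q ^ (-k)) /
    ((1 - (q : ℂ)) * ((z * q ^ (-k) : ℝ) : ℂ))

/-- The c-function `c_z(γ)`. -/
def cz (q : ℝ) (a b c d : ℂ) (z : ℝ) (γ : ℂ) : ℂ :=
  let s : ℂ := sP q a b c d
  poch q (s / γ) * poch q (c * q / (a * s * γ)) * poch q (d * q / (a * s * γ)) *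
      theta q (b * s * z * γ) /
    (poch q (c * q / a) * poch q (d * q / a) * poch q (1 / γ ^ 2) * theta q (b * z))

/-- The expansion coefficient `d_z(γ)`. -/
def dz (q : ℝ) (a b c d : ℂ) (z : ℝ) (γ : ℂ) : ℂ :=
  let s : ℂ := sP q a b c d
  (poch q (c * q / a) * poch q (d * q / a) * theta q (b * z) /
      (theta q (a / b) * theta q (c * z) * theta q (d * z))) *
    (poch q (c * q * γ / (s * b)) * poch q (d * q * γ / (s * b)) *
        theta q (a * s * z / (q * γ)) /
      (poch q (q * γ ^ 2) * poch q (s / γ)))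

/-- The Casorati determinant `v(γ) = D(Φ_γ^+, Φ_γ^-)`. -/
def vFun (q zm zp : ℝ) (a b c d : ℂ) (γ : ℂ) : ℂ :=
  let s : ℂ := sP q a b c d;
  -((zp : ℂ) * (1 - (q : ℂ)) * theta q ((zm : ℂ) / zp) /
      (theta q (c * zm) * theta q (d * zm) * theta q (c * zp) * theta q (d * zp))) *
    (poch q (c * q * γ / (a * s)) * poch q (d * q * γ / (a * s)) * poch q (c * q * γ / (b * s)) *
        poch q (d * q * γ / (b * s)) * poch q (s * γ) * poch q (q * γ / s) *
        theta q (a * b * s * zm * zp / (q * γ)) /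
      (γ * (poch q (q * γ ^ 2)) ^ 2))

/-- The function `v₁(γ)` in the continuous part of the spectral measure. -/
def v1Fun (q zm zp : ℝ) (a b c d : ℂ) (γ : ℂ) : ℂ :=
  let s : ℂ := sP q a b c d
  ((poch q (c * q / a)) ^ 2 * (poch q (d * q / a)) ^ 2 * theta q (b * zp) * theta q (b * zm) /
      ((1 - (q : ℂ)) * a * b * (zm : ℂ) ^ 2 * (zp : ℂ) ^ 2 *
        (theta q ((zm : ℂ) / zp) * theta q ((zp : ℂ) / zm) * theta q (a / b) * theta q (b / a)))) *
    (poch q (γ ^ 2) * poch q (γ⁻¹ ^ 2) /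
      (poch q (s * γ) * poch q (s / γ) * poch q (c * q * γ / (a * s)) *
        poch q (c * q / (a * s * γ)) * poch q (d * q * γ / (a * s)) *
        poch q (d * q / (a * s * γ)) *
        (theta q (s * γ) * theta q (s / γ) * theta q (a * b * s * zm * zp * γ) *
          theta q (a * b * s * zm * zp / γ)))) *
    ((zm : ℂ) * (theta q (a * zp) * theta q (c * zp) * theta q (d * zp) * theta q (b * zm) *
          theta q (a * s * zm * γ) * theta q (a * s * zm / γ)) -
      (zp : ℂ) * (theta q (a * zm) * theta q (c * zm) * theta q (d * zm) * theta q (b * zp) *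
          theta q (a * s * zp * γ) * theta q (a * s * zp / γ)))

/-- The function `v₂(γ)` in the continuous part of the spectral measure. -/
def v2Fun (q zm zp : ℝ) (a b c d : ℂ) (γ : ℂ) : ℂ :=
  let s : ℂ := sP q a b c d
  (poch q (c * q / a) * poch q (d * q / a) * poch q (c * q / b) * poch q (d * q / b) *
      (theta q (a * zp) * theta q (a * zm) * theta q (b * zp) * theta q (b * zm) *
        theta q (c * d * zm * zp)) /
      (a * b * (zm : ℂ) ^ 2 * (zp : ℂ) * (1 - (q : ℂ)) *
        (theta q ((zp : ℂ) / zm) * theta q (a / b) * theta q (b / a)))) *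
    (poch q (γ ^ 2) * poch q (γ⁻¹ ^ 2) /
      (poch q (s * γ) * poch q (s / γ) *
        (theta q (s * γ) * theta q (s / γ) * theta q (a * b * s * zm * zp * γ) *
          theta q (a * b * s * zm * zp / γ))))

/-- The function `u₁(γ)`. -/
def u1Fun (q zm zp : ℝ) (a b c d : ℂ) (γ : ℂ) : ℂ :=
  Kz q a b c d zp * cz q a b c d zp γ * cz q a b c d zp γ⁻¹ -
    Kz q a b c d zm * cz q a b c d zm γ * cz q a b c d zm γ⁻¹

/-- The function `u₂(γ)`. -/
def u2Fun (q zm zp : ℝ) (a b c d : ℂ) (γ : ℂ) : ℂ :=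
  Kz q a b c d zp * cz q a b c d zp γ * cz q b a c d zp γ⁻¹ -
    Kz q a b c d zm * cz q a b c d zm γ * cz q b a c d zm γ⁻¹

/-- The big q-Jacobi polynomial `P_k(y; α, β, δ; q)`. -/
def bigqJacobiP (q : ℝ) (α β δ : ℂ) (k : ℕ) (y : ℂ) : ℂ :=
  ∑ j ∈ Finset.range (k + 1),
    pochN q (((q : ℂ) ^ k)⁻¹) j * pochN q (α * β * (q : ℂ) ^ (k + 1)) j * pochN q y j /
      (pochN q q j * pochN q (α * q) j * pochN q (δ * q) j) * (q : ℂ) ^ j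

/-!
The identity is summation by parts for the q-difference operator `L`. The weight satisfies the
Pearson equation `(x/q) B(x/q) w(x/q) = x A(x) w(x)`, which follows from `(y;q)_∞ = (1-y)(qy;q)_∞`
and `s² = cdq/(ab)`. With it, the pointwise Lagrange identity
`(1-q) x w(x) ((Lf)(x) h(x) - f(x) (Lh)(x)) = D(f,h)(x/q) - D(f,h)(x)` holds at every lattice point,
and summing it over `z q^j` telescopes. On `P` the coefficients `A, B, C` are real (`s > 0` and
`{a,b}`, `{c,d}` are closed under conjugation), so `conj ∘ L = L ∘ conj`, which turns
`⟨f, Lg⟩` into the bilinear pairing of `f` with `L (conj g)`.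
-/

section QPochhammer

variable {q : ℂ}

lemma multipliable_one_sub_mul_pow (hq : ‖q‖ < 1) (x : ℂ) :
    Multipliable fun j : ℕ => 1 - x * q ^ j := by
  simpa [sub_eq_add_neg] using multipliable_one_add_of_summable (f := fun j : ℕ => -(x * q ^ j))
    (by simpa [norm_mul, norm_pow] using
      (summable_geometric_of_lt_one (norm_nonneg q) hq).mul_left ‖x‖)

lemma poch_eq_one_sub_mul_poch_mul (hq : ‖q‖ < 1) (x : ℂ) :
    poch q x = (1 - x) * poch q (q * x) := by
  have htail : Multipliable fun j : ℕ => 1 - x * q ^ (j + 1) :=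
    (multipliable_one_sub_mul_pow hq (q * x)).congr fun j => by ring
  rw [poch, tprod_eq_zero_mul' (f := fun j => 1 - x * q ^ j) htail, pow_zero, mul_one, poch]
  exact congrArg _ (tprod_congr fun j => by ring)

lemma poch_div (hq : ‖q‖ < 1) (hq0 : q ≠ 0) (y : ℂ) :
    poch q (y / q) = (1 - y / q) * poch q y := by
  simpa [mul_div_cancel₀ _ hq0] using poch_eq_one_sub_mul_poch_mul hq (y / q)

end QPochhammer

lemma sum_Icc_sub_telescope {M : Type*} [AddCommGroup M] (F : ℤ → M) {n m : ℤ} (h : n - 1 ≤ m) :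
    ∑ j ∈ Finset.Icc n m, (F (j - 1) - F j) = F (n - 1) - F m := by
  induction m, h using Int.leInduction with
  | base => simp
  | succ m hm ih =>
    rw [← Finset.insert_Icc_right_eq_Icc_add_one (by omega),
      Finset.sum_insert (by simp), ih, add_sub_cancel_right]
    abel

section BigQJacobiOperator

variable {q : ℝ} {a b c d : ℂ}

lemma sP_sq : sP q a b c d ^ 2 = c * d * q / (a * b) := by
  rw [sP, one_div]
  exact Complex.cpow_ofNat_inv_pow _ 2

lemma w_div (hq : |q| < 1) (hq0 : q ≠ 0) (x : ℝ) :
    w q a b c d (x / q) =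
      (1 - a * x / q) * (1 - b * x / q) / ((1 - c * x / q) * (1 - d * x / q)) *
        w q a b c d x := by
  have hqn : ‖(q : ℂ)‖ < 1 := by rwa [Complex.norm_real, Real.norm_eq_abs]
  have hqc : (q : ℂ) ≠ 0 := by exact_mod_cast hq0
  have hshift (e : ℂ) : poch q (e * ((x / q : ℝ) : ℂ)) = (1 - e * x / q) * poch q (e * x) := by
    rw [← poch_div hqn hqc]
    push_cast
    ring_nf
  rw [w, w, hshift, hshift, hshift, hshift]
  simp only [div_eq_mul_inv, mul_inv]
  ring

lemma pearson (hq : |q| < 1) (hq0 : q ≠ 0) (ha : a ≠ 0) (hb : b ≠ 0) (hc : c ≠ 0) (hd : d ≠ 0)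
    {x : ℝ} (hx : x ≠ 0) (hcx : c * x ≠ q) (hdx : d * x ≠ q) :
    ((x / q : ℝ) : ℂ) * Bcoef q a b c d (x / q) * w q a b c d (x / q) =
      x * Acoef q a b c d x * w q a b c d x := by
  have hqc : (q : ℂ) ≠ 0 := by exact_mod_cast hq0
  have hxc : (x : ℂ) ≠ 0 := by exact_mod_cast hx
  have hs : sP q a b c d ^ 2 = c * d * q / (a * b) := sP_sq
  have hs0 : sP q a b c d ≠ 0 := by
    refine (pow_ne_zero_iff two_ne_zero).1 ?_
    rw [hs]
    exact div_ne_zero (mul_ne_zero (mul_ne_zero hc hd) hqc) (mul_ne_zero ha hb)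
  have hcx' : (q : ℂ) - x * c ≠ 0 := sub_ne_zero.2 (by rw [mul_comm]; exact hcx.symm)
  have hdx' : (q : ℂ) - x * d ≠ 0 := sub_ne_zero.2 (by rw [mul_comm]; exact hdx.symm)
  rw [w_div hq hq0, Bcoef, Acoef]
  push_cast
  field_simp
  -- `s² = cdq/(ab)` is exactly what makes the remaining constant factor equal to `1`
  rw [hs]
  field_simp
  ring

lemma casD_eq (hq1 : q ≠ 1) (f g : ℝ → ℂ) {x : ℝ} (hx : x ≠ 0) :
    casD q a b c d f g x =
      (1 - q) * x * Bcoef q a b c d x * w q a b c d x * (f x * g (q * x) - f (q * x) * g x) := by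
  have h1q : (1 : ℂ) - q ≠ 0 := sub_ne_zero.2 (by exact_mod_cast hq1.symm)
  have hxc : (x : ℂ) ≠ 0 := by exact_mod_cast hx
  rw [casD, u]
  field_simp

lemma lagrange_identity (hq : |q| < 1) (hq0 : q ≠ 0)
    (ha : a ≠ 0) (hb : b ≠ 0) (hc : c ≠ 0) (hd : d ≠ 0) (f h : ℝ → ℂ)
    {x : ℝ} (hx : x ≠ 0) (hcx : c * x ≠ q) (hdx : d * x ≠ q) :
    (1 - q) * ((Lop q a b c d f x * h x - f x * Lop q a b c d h x) * w q a b c d x * x) =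
      casD q a b c d f h (x / q) - casD q a b c d f h x := by
  have hq1 : q ≠ 1 := (abs_lt.1 hq).2.ne
  have hqx : q * (x / q) = x := mul_div_cancel₀ x hq0
  rw [casD_eq hq1 f h (div_ne_zero hx hq0), casD_eq hq1 f h hx, hqx, Lop, Lop]
  -- the `C`-terms cancel, the `B`-terms give `-D(x)`, and by Pearson the `A`-terms give `D(x/q)`
  linear_combination -(1 - (q : ℂ)) * (f (x / q) * h x - f x * h (x / q)) *
    pearson hq hq0 ha hb hc hd hx hcx hdx

lemma mul_zpow_ne_of_ne_inv_mul_zpow (hq0 : q ≠ 0) {z : ℝ} (hz : z ≠ 0) {e : ℂ}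
    (he : ∀ k : ℤ, e ≠ (z : ℂ)⁻¹ * q ^ k) (j : ℤ) : e * ((z * q ^ j : ℝ) : ℂ) ≠ q := by
  have hqc : (q : ℂ) ≠ 0 := by exact_mod_cast hq0
  have hzc : (z : ℂ) ≠ 0 := by exact_mod_cast hz
  intro h
  apply he (1 - j)
  push_cast at h
  rw [zpow_sub₀ hqc, zpow_one]
  field_simp
  linear_combination h

lemma sum_lagrange_eq_casD_sub (hq : |q| < 1) (hq0 : q ≠ 0)
    (ha : a ≠ 0) (hb : b ≠ 0) (hc : c ≠ 0) (hd : d ≠ 0) {z : ℝ} (hz : z ≠ 0)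
    (hcz : ∀ k : ℤ, c ≠ (z : ℂ)⁻¹ * q ^ k) (hdz : ∀ k : ℤ, d ≠ (z : ℂ)⁻¹ * q ^ k)
    (f h : ℝ → ℂ) {n m : ℤ} (hnm : n - 1 ≤ m) :
    (1 - q) * (∑ j ∈ Finset.Icc n m, Lop q a b c d f (z * q ^ j) * h (z * q ^ j) *
          w q a b c d (z * q ^ j) * ((z * q ^ j : ℝ) : ℂ) -
        ∑ j ∈ Finset.Icc n m, f (z * q ^ j) * Lop q a b c d h (z * q ^ j) *
          w q a b c d (z * q ^ j) * ((z * q ^ j : ℝ) : ℂ)) =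
      casD q a b c d f h (z * q ^ (n - 1)) - casD q a b c d f h (z * q ^ m) := by
  rw [← Finset.sum_sub_distrib, Finset.mul_sum,
    ← sum_Icc_sub_telescope (fun j => casD q a b c d f h (z * q ^ j)) hnm]
  refine Finset.sum_congr rfl fun j _ => ?_
  have hshift : z * q ^ (j - 1) = z * q ^ j / q := by
    rw [zpow_sub₀ hq0, zpow_one, mul_div_assoc]
  rw [hshift, ← lagrange_identity hq hq0 ha hb hc hd f h (mul_ne_zero hz (zpow_ne_zero j hq0))
    (mul_zpow_ne_of_ne_inv_mul_zpow hq0 hz hcz j) (mul_zpow_ne_of_ne_inv_mul_zpow hq0 hz hdz j)]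
  ring

end BigQJacobiOperator

section Conjugation

open ComplexConjugate

variable {q zm zp : ℝ} {α β a b c d : ℂ}

lemma pairCond.conj_eq_or_conj_eq_swap (h : pairCond q zm zp α β) :
    (conj α = α ∧ conj β = β) ∨ (conj α = β ∧ conj β = α) := by
  rcases h with h | ⟨A, B, k, rfl, rfl, -⟩ | ⟨A, B, k, rfl, rfl, -⟩
  · exact Or.inr ⟨by rw [h, Complex.conj_conj], h.symm⟩
  all_goals exact Or.inl ⟨Complex.conj_ofReal A, Complex.conj_ofReal B⟩

lemma pairCond.exists_pos_mul_eq (hq0 : 0 < q) (hzm : zm < 0) (hzp : 0 < zp) (hβ : β ≠ 0)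
    (h : pairCond q zm zp α β) : ∃ r : ℝ, 0 < r ∧ α * β = r := by
  rcases h with rfl | ⟨A, B, k, rfl, rfl, h₁, h₂, -⟩ | ⟨A, B, k, rfl, rfl, -, h₂, h₃⟩
  · exact ⟨Complex.normSq β, Complex.normSq_pos.2 hβ, by rw [mul_comm, Complex.mul_conj]⟩
  · have hzk : 0 < zp * q ^ k := mul_pos hzp (zpow_pos hq0 k)
    have hB : 0 < B := one_div_pos.1 (hzk.trans h₁)
    have hA : 0 < A := one_div_pos.1 ((hzk.trans h₁).trans h₂)
    exact ⟨A * B, mul_pos hA hB, by push_cast; ring⟩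
  · have hzk : zm * q ^ k < 0 := mul_neg_of_neg_of_pos hzm (zpow_pos hq0 k)
    have hB : B < 0 := one_div_neg.1 (h₃.trans hzk)
    have hA : A < 0 := one_div_neg.1 (h₂.trans (h₃.trans hzk))
    exact ⟨A * B, mul_pos_of_neg_of_neg hA hB, by push_cast; ring⟩

lemma conj_sP {r : ℝ} (hr : 0 ≤ r) (h : c * d * q / (a * b) = r) :
    conj (sP q a b c d) = sP q a b c d := by
  rw [sP, h, show (1 : ℂ) / 2 = ((1 / 2 : ℝ) : ℂ) by push_cast; rfl, ← Complex.ofReal_cpow hr,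
    Complex.conj_ofReal]

lemma conj_sP_of_pairCond (hq0 : 0 < q) (hzm : zm < 0) (hzp : 0 < zp) (hb : b ≠ 0) (hd : d ≠ 0)
    (hab : pairCond q zm zp a b) (hcd : pairCond q zm zp c d) :
    conj (sP q a b c d) = sP q a b c d := by
  obtain ⟨r₁, hr₁, h₁⟩ := hab.exists_pos_mul_eq hq0 hzm hzp hb
  obtain ⟨r₂, hr₂, h₂⟩ := hcd.exists_pos_mul_eq hq0 hzm hzp hd
  refine conj_sP (r := r₂ * q / r₁) (by positivity) ?_
  rw [h₁, h₂]
  push_cast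
  ring

lemma conj_Lop (hs : conj (sP q a b c d) = sP q a b c d)
    (hab : (conj a = a ∧ conj b = b) ∨ (conj a = b ∧ conj b = a))
    (hcd : (conj c = c ∧ conj d = d) ∨ (conj c = d ∧ conj d = c)) (g : ℝ → ℂ) (x : ℝ) :
    conj (Lop q a b c d g x) = Lop q a b c d (fun y => conj (g y)) x := by
  have hA : conj (Acoef q a b c d x) = Acoef q a b c d x := by
    simp only [Acoef, map_mul, map_inv₀, map_sub, map_one, map_div₀, Complex.conj_ofReal, hs]
    rcases hab with ⟨ha, hb⟩ | ⟨ha, hb⟩ <;> rw [ha, hb]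
    ring
  have hB : conj (Bcoef q a b c d x) = Bcoef q a b c d x := by
    simp only [Bcoef, map_mul, map_sub, map_one, map_div₀, Complex.conj_ofReal, hs]
    rcases hcd with ⟨hc, hd⟩ | ⟨hc, hd⟩ <;> rw [hc, hd]
    ring
  have hC : conj (Ccoef q a b c d x) = Ccoef q a b c d x := by
    simp only [Ccoef, map_sub, map_add, map_inv₀, hs, hA, hB]
  simp only [Lop, map_add, map_mul, hA, hB, hC]

end Conjugation

/-- the Casorati/Green identity for truncated inner products. -/
theorem statement0 (q zm zp : ℝ) (a b c d : ℂ)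
    (hq0 : 0 < q) (hq1 : q < 1) (hzm : zm < 0) (hzp : 0 < zp)
    (hP : memP q zm zp a b c d)
    (f g : ℝ → ℂ) (k l m n : ℤ) (hkl : k ≤ l) (hnm : n ≤ m) :
    trunc q zm zp a b c d (Lop q a b c d f) g k l m n -
        trunc q zm zp a b c d f (Lop q a b c d g) k l m n =
      casD q a b c d f (fun x => (starRingEnd ℂ) (g x)) (zm * q ^ l) -
          casD q a b c d f (fun x => (starRingEnd ℂ) (g x)) (zm * q ^ (k - 1)) +
        casD q a b c d f (fun x => (starRingEnd ℂ) (g x)) (zp * q ^ (n - 1)) -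
        casD q a b c d f (fun x => (starRingEnd ℂ) (g x)) (zp * q ^ m) := by
  obtain ⟨ha, hb, hc, hd, -, hlat, hab, hcd⟩ := hP
  have hq : |q| < 1 := abs_lt.2 ⟨by linarith, hq1⟩
  have hconj := conj_Lop (conj_sP_of_pairCond hq0 hzm hzp hb hd hab hcd)
    hab.conj_eq_or_conj_eq_swap hcd.conj_eq_or_conj_eq_swap g
  have hplus := sum_lagrange_eq_casD_sub hq hq0.ne' ha hb hc hd hzp.ne'
    (fun k => (hlat c (by simp) k).1) (fun k => (hlat d (by simp) k).1)
    f (fun x => starRingEnd ℂ (g x)) (by omega : n - 1 ≤ m)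
  have hminus := sum_lagrange_eq_casD_sub hq hq0.ne' ha hb hc hd hzm.ne
    (fun k => (hlat c (by simp) k).2) (fun k => (hlat d (by simp) k).2)
    f (fun x => starRingEnd ℂ (g x)) (by omega : k - 1 ≤ l)
  simp only [trunc, hconj]
  linear_combination hplus - hminus
end VVBQJ
end
end

section
/- Let (a,b,c,d) ∈ P_gen and γ ∈ ℂ*. Then the limits lim_{k→∞} φ_γ(z₋q^k) and lim_{k→∞} φ_γ(z₊q^k) exist and are both equal to Σ_{n≥0} [(sγ;q)_n (s/γ;q)_n / ((q;q)_n (cq/a;q)_n (dq/a;q)_n)]·(−1)^n·q^{n(n−1)/2}·(bq/a)^n, and the limits lim_{k→∞} (D_q φ_γ)(z₋q^k) and lim_{k→∞} (D_q φ_γ)(z₊q^k) exist and are both equal to [b(1−sγ)(1−s/γ) / ((1−q)(1−cq/a)(1−dq/a))] · Σ_{n≥0} [(sqγ;q)_n (sq/γ;q)_n / ((q;q)_n (cq²/a;q)_n (dq²/a;q)_n)]·(−1)^n·q^{n(n−1)/2}·(bq/a)^n. (Here φ_γ(z±q^k) is defined for all k large enough that |z±q^k| < 1/|b|.) -/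
open Complex Filter

noncomputable section

namespace VVBQJ

/-- The value `φ_γ(0)`. -/
def phiZeroVal (q : ℝ) (a b c d : ℂ) (γ : ℂ) : ℂ :=
  ∑' n : ℕ,
    pochN q (sP q a b c d * γ) n * pochN q (sP q a b c d / γ) n /
      (pochN q q n * pochN q (c * q / a) n * pochN q (d * q / a) n) *
      ((-1) ^ n * (q : ℂ) ^ (n * (n - 1) / 2) * (b * q / a) ^ n)

/-- The value `φ_γ'(0)`. -/
def phiZeroDer (q : ℝ) (a b c d : ℂ) (γ : ℂ) : ℂ :=
  b * (1 - sP q a b c d * γ) * (1 - sP q a b c d / γ) /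
      ((1 - (q : ℂ)) * (1 - c * q / a) * (1 - d * q / a)) *
    ∑' n : ℕ,
      pochN q (sP q a b c d * q * γ) n * pochN q (sP q a b c d * q / γ) n /
        (pochN q q n * pochN q (c * (q : ℂ) ^ 2 / a) n * pochN q (d * (q : ℂ) ^ 2 / a) n) *
        ((-1) ^ n * (q : ℂ) ^ (n * (n - 1) / 2) * (b * q / a) ^ n)


/-!
For `x ≠ 0` the `n`-th term of `φ_γ` is `phiCoeff n` times the polynomial
`(q/(ax);q)_n (bx)^n = ∏_{j<n} (bx - (b/a) q^{j+1})`, whose q-difference quotient is again a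
polynomial. The coefficients converge, because the q-shifted factorials in their denominators
tend to infinite products that the genericity of the parameters keeps away from zero, so they are
bounded; on `‖bx‖ ≤ 1/2` both polynomials are `O(n 2⁻ⁿ)`. By dominated convergence both series are
continuous at `0`, and their values there are the two stated series.
-/

section Pochhammer

variable {q : ℂ}

lemma pochN_succ (x : ℂ) (n : ℕ) : pochN q x (n + 1) = pochN q x n * (1 - x * q ^ n) :=
  Finset.prod_range_succ _ _

lemma pochN_succ' (x : ℂ) (n : ℕ) : pochN q x (n + 1) = (1 - x) * pochN q (q * x) n := by
  rw [pochN, Finset.prod_range_succ', pow_zero, mul_one, mul_comm, pochN]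
  congr 1
  refine Finset.prod_congr rfl fun j _ => ?_
  ring

lemma summable_norm_neg_mul_pow (hq : ‖q‖ < 1) (x : ℂ) :
    Summable fun j : ℕ => ‖-(x * q ^ j)‖ := by
  simpa [norm_mul, norm_pow] using
    (summable_geometric_of_lt_one (norm_nonneg q) hq).mul_left ‖x‖

lemma tendsto_pochN (hq : ‖q‖ < 1) (x : ℂ) :
    Tendsto (pochN q x) atTop (nhds (poch q x)) := by
  unfold pochN poch
  simpa only [← sub_eq_add_neg] using
    (multipliable_one_add_of_summable (summable_norm_neg_mul_pow hq x)).tendsto_prod_tprod_nat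

lemma poch_ne_zero (hq : ‖q‖ < 1) {x : ℂ} (hx : ∀ j : ℕ, 1 - x * q ^ j ≠ 0) : poch q x ≠ 0 := by
  unfold poch
  simpa only [← sub_eq_add_neg] using tprod_one_add_ne_zero_of_summable
    (fun j => by simpa only [← sub_eq_add_neg] using hx j) (summable_norm_neg_mul_pow hq x)

end Pochhammer

lemma prod_half_add_mul_pow_le {r t : ℝ} (hr0 : 0 ≤ r) (hr1 : r < 1) (ht : 0 ≤ t) (n : ℕ) :
    ∏ j ∈ Finset.range n, (1 / 2 + t * r ^ (j + 1))
      ≤ (1 / 2) ^ n * Real.exp (2 * t * r / (1 - r)) := by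
  have hsum : ∑ j ∈ Finset.range n, 2 * t * r * r ^ j ≤ 2 * t * r / (1 - r) := by
    have hgeom := geom_sum_Ico_le_of_lt_one (m := 0) (n := n) hr0 hr1
    rw [pow_zero, ← Finset.range_eq_Ico] at hgeom
    calc ∑ j ∈ Finset.range n, 2 * t * r * r ^ j = 2 * t * r * ∑ j ∈ Finset.range n, r ^ j :=
          (Finset.mul_sum _ _ _).symm
      _ ≤ 2 * t * r * (1 / (1 - r)) := by gcongr
      _ = 2 * t * r / (1 - r) := mul_one_div _ _
  calc ∏ j ∈ Finset.range n, (1 / 2 + t * r ^ (j + 1))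
      = (1 / 2) ^ n * ∏ j ∈ Finset.range n, (1 + 2 * t * r * r ^ j) := by
        rw [← Finset.card_range n, ← Finset.prod_const, Finset.card_range,
          ← Finset.prod_mul_distrib]
        refine Finset.prod_congr rfl fun j _ => ?_
        ring
    _ ≤ (1 / 2) ^ n * Real.exp (2 * t * r / (1 - r)) := by
        gcongr
        exact (Real.prod_one_add_le_exp_sum _ fun j => by positivity).trans (Real.exp_le_exp.2 hsum)

lemma choose_succ_two (n : ℕ) : (n + 1).choose 2 = n.choose 2 + n := by
  rw [Nat.choose_succ_succ', Nat.choose_one_right, add_comm]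

section PhiPoly

variable (q a b : ℂ)

/-- `(q/(ax);q)_n (bx)^n`, the `n`-th term of `φ_γ` without its coefficient, as a polynomial. -/
def phiPoly (n : ℕ) (x : ℂ) : ℂ := ∏ j ∈ Finset.range n, (b * x - b / a * q ^ (j + 1))

/-- The q-difference quotient of `phiPoly`, by the q-Leibniz rule (`phiPoly_sub_phiPoly`). -/
def phiPolyDq : ℕ → ℂ → ℂ
  | 0, _ => 0
  | n + 1, x => phiPolyDq n x * (b * x - b / a * q ^ (n + 1)) + b * phiPoly q a b n (q * x)

lemma phiPoly_succ (n : ℕ) (x : ℂ) :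
    phiPoly q a b (n + 1) x = phiPoly q a b n x * (b * x - b / a * q ^ (n + 1)) :=
  Finset.prod_range_succ _ _

lemma continuous_phiPoly (n : ℕ) : Continuous (phiPoly q a b n) := by
  unfold phiPoly
  fun_prop

lemma continuous_phiPolyDq (n : ℕ) : Continuous (phiPolyDq q a b n) := by
  induction n with
  | zero => exact continuous_const
  | succ n ih =>
    have := continuous_phiPoly q a b n
    simp only [phiPolyDq]
    fun_prop

lemma phiPoly_sub_phiPoly (n : ℕ) (x : ℂ) :
    phiPoly q a b n x - phiPoly q a b n (q * x) = (1 - q) * x * phiPolyDq q a b n x := by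
  induction n with
  | zero => simp [phiPoly, phiPolyDq]
  | succ n ih =>
    rw [phiPolyDq, phiPoly_succ, phiPoly_succ]
    linear_combination (b * x - b / a * q ^ (n + 1)) * ih

lemma phiPoly_apply_zero (n : ℕ) :
    phiPoly q a b n 0 = (-(b / a)) ^ n * q ^ ((n + 1).choose 2) := by
  induction n with
  | zero => simp [phiPoly]
  | succ n ih =>
    rw [phiPoly_succ, ih, choose_succ_two (n + 1), pow_add]
    ring

lemma one_sub_mul_phiPolyDq_succ_apply_zero (n : ℕ) :
    (1 - q) * phiPolyDq q a b (n + 1) 0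
      = b * (-(b / a)) ^ n * q ^ ((n + 1).choose 2) * (1 - q ^ (n + 1)) := by
  induction n with
  | zero => simp [phiPolyDq, phiPoly]; ring
  | succ n ih =>
    rw [phiPolyDq, mul_zero, mul_zero, phiPoly_apply_zero, choose_succ_two (n + 1), pow_add]
    linear_combination (-(b / a) * q ^ (n + 2)) * ih

variable {q a b}

lemma pochN_mul_pow_eq_phiPoly {x : ℂ} (hx : x ≠ 0) (n : ℕ) :
    pochN q (q / (a * x)) n * (b * x) ^ n = phiPoly q a b n x := by
  rw [pochN, ← Finset.card_range n, ← Finset.prod_const, Finset.card_range,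
    ← Finset.prod_mul_distrib, phiPoly]
  refine Finset.prod_congr rfl fun j _ => ?_
  field_simp
  ring

lemma norm_mul_mul_le_half (hq : ‖q‖ ≤ 1) {x : ℂ} (hx : ‖b * x‖ ≤ 1 / 2) :
    ‖b * (q * x)‖ ≤ 1 / 2 := by
  rw [mul_left_comm, norm_mul]
  exact (mul_le_of_le_one_left (norm_nonneg _) hq).trans hx

lemma norm_phiPoly_factor_le {x : ℂ} (hx : ‖b * x‖ ≤ 1 / 2) (j : ℕ) :
    ‖b * x - b / a * q ^ j‖ ≤ 1 / 2 + ‖b / a‖ * ‖q‖ ^ j :=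
  calc ‖b * x - b / a * q ^ j‖ ≤ ‖b * x‖ + ‖b / a * q ^ j‖ := norm_sub_le _ _
    _ ≤ 1 / 2 + ‖b / a‖ * ‖q‖ ^ j := by rw [norm_mul (b / a), norm_pow]; gcongr

lemma norm_phiPoly_le {x : ℂ} (hx : ‖b * x‖ ≤ 1 / 2) (n : ℕ) :
    ‖phiPoly q a b n x‖ ≤ ∏ j ∈ Finset.range n, (1 / 2 + ‖b / a‖ * ‖q‖ ^ (j + 1)) := by
  rw [phiPoly, norm_prod]
  exact Finset.prod_le_prod (fun j _ => norm_nonneg _) fun j _ => norm_phiPoly_factor_le hx _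

lemma norm_phiPolyDq_le (hq : ‖q‖ ≤ 1) {x : ℂ} (hx : ‖b * x‖ ≤ 1 / 2) (n : ℕ) :
    ‖phiPolyDq q a b n x‖
      ≤ 2 * ‖b‖ * n * ∏ j ∈ Finset.range n, (1 / 2 + ‖b / a‖ * ‖q‖ ^ (j + 1)) := by
  have hqx := norm_mul_mul_le_half hq hx
  induction n with
  | zero => simp [phiPolyDq]
  | succ n ih =>
    set G := ∏ j ∈ Finset.range n, (1 / 2 + ‖b / a‖ * ‖q‖ ^ (j + 1))
    have hfactor := norm_phiPoly_factor_le (q := q) (a := a) hx (n + 1)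
    have hG : 0 ≤ G := Finset.prod_nonneg fun j _ => by positivity
    calc ‖phiPolyDq q a b (n + 1) x‖
        ≤ ‖phiPolyDq q a b n x‖ * ‖b * x - b / a * q ^ (n + 1)‖
          + ‖b‖ * ‖phiPoly q a b n (q * x)‖ := by
          rw [phiPolyDq, ← norm_mul, ← norm_mul]; exact norm_add_le _ _
      _ ≤ 2 * ‖b‖ * n * G * (1 / 2 + ‖b / a‖ * ‖q‖ ^ (n + 1)) + ‖b‖ * G := by
          gcongr
          exact norm_phiPoly_le hqx n
      _ ≤ 2 * ‖b‖ * ↑(n + 1) * (G * (1 / 2 + ‖b / a‖ * ‖q‖ ^ (n + 1))) := by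
          push_cast
          nlinarith [mul_nonneg (mul_nonneg (norm_nonneg b) hG)
            (by positivity : 0 ≤ ‖b / a‖ * ‖q‖ ^ (n + 1))]
      _ = _ := by rw [Finset.prod_range_succ]

end PhiPoly

lemma continuousAt_tsum_of_norm_le {X : Type*} [TopologicalSpace X] {f : ℕ → X → ℂ} {x₀ : X}
    {s : Set X} (hs : s ∈ nhds x₀) {bound : ℕ → ℝ} (hbound : Summable bound)
    (hf : ∀ n, ContinuousAt (f n) x₀) (hle : ∀ n, ∀ x ∈ s, ‖f n x‖ ≤ bound n) :
    ContinuousAt (fun x => ∑' n, f n x) x₀ :=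
  tendsto_tsum_of_dominated_convergence hbound hf
    (eventually_of_mem hs fun x hx n => hle n x hx)

lemma setOf_norm_mul_le_half_mem_nhds_zero (b : ℂ) : {x : ℂ | ‖b * x‖ ≤ 1 / 2} ∈ nhds 0 := by
  have hcont : Continuous fun x : ℂ => ‖b * x‖ := by fun_prop
  exact hcont.continuousAt.preimage_mem_nhds (Iic_mem_nhds (by simp))

section Domination

variable {q a b : ℂ} {C : ℕ → ℂ} {K : ℝ}

lemma norm_mul_phiPoly_le (hq : ‖q‖ < 1) (hC : ∀ n, ‖C n‖ ≤ K) {x : ℂ} (hx : ‖b * x‖ ≤ 1 / 2)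
    (n : ℕ) :
    ‖C n * phiPoly q a b n x‖
      ≤ K * Real.exp (2 * ‖b / a‖ * ‖q‖ / (1 - ‖q‖)) * (1 / 2) ^ n := by
  rw [norm_mul, mul_assoc, mul_comm (Real.exp _)]
  exact mul_le_mul (hC n) ((norm_phiPoly_le hx n).trans
    (prod_half_add_mul_pow_le (norm_nonneg q) hq (norm_nonneg _) n))
    (norm_nonneg _) ((norm_nonneg _).trans (hC 0))

lemma norm_mul_phiPolyDq_le (hq : ‖q‖ < 1) (hC : ∀ n, ‖C n‖ ≤ K) {x : ℂ}
    (hx : ‖b * x‖ ≤ 1 / 2) (n : ℕ) :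
    ‖C n * phiPolyDq q a b n x‖
      ≤ 2 * ‖b‖ * K * Real.exp (2 * ‖b / a‖ * ‖q‖ / (1 - ‖q‖)) * (n * (1 / 2) ^ n) := by
  have hK : 0 ≤ K := (norm_nonneg _).trans (hC 0)
  calc ‖C n * phiPolyDq q a b n x‖
      ≤ K * (2 * ‖b‖ * n * ((1 / 2) ^ n * Real.exp (2 * ‖b / a‖ * ‖q‖ / (1 - ‖q‖)))) := by
        rw [norm_mul]
        refine mul_le_mul (hC n) ((norm_phiPolyDq_le hq.le hx n).trans ?_) (norm_nonneg _) hK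
        gcongr
        exact prod_half_add_mul_pow_le (norm_nonneg q) hq (norm_nonneg _) n
    _ = _ := by ring

lemma summable_mul_phiPoly (hq : ‖q‖ < 1) (hC : ∀ n, ‖C n‖ ≤ K) {x : ℂ}
    (hx : ‖b * x‖ ≤ 1 / 2) : Summable fun n => C n * phiPoly q a b n x :=
  ((summable_geometric_of_lt_one (by norm_num) (by norm_num)).mul_left _).of_norm_bounded
    (norm_mul_phiPoly_le hq hC hx)

lemma continuousAt_tsum_mul_phiPoly (hq : ‖q‖ < 1) (hC : ∀ n, ‖C n‖ ≤ K) :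
    ContinuousAt (fun x => ∑' n, C n * phiPoly q a b n x) 0 :=
  continuousAt_tsum_of_norm_le (setOf_norm_mul_le_half_mem_nhds_zero b)
    ((summable_geometric_of_lt_one (by norm_num) (by norm_num)).mul_left _)
    (fun n => (continuous_const.mul (continuous_phiPoly q a b n)).continuousAt)
    fun n _ hx => norm_mul_phiPoly_le hq hC hx n

lemma continuousAt_tsum_mul_phiPolyDq (hq : ‖q‖ < 1) (hC : ∀ n, ‖C n‖ ≤ K) :
    ContinuousAt (fun x => ∑' n, C n * phiPolyDq q a b n x) 0 := by
  have hsum : Summable fun n : ℕ => (n : ℝ) * (1 / 2) ^ n := by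
    simpa using summable_pow_mul_geometric_of_norm_lt_one (R := ℝ) 1 (r := 1 / 2) (by norm_num)
  exact continuousAt_tsum_of_norm_le (setOf_norm_mul_le_half_mem_nhds_zero b)
    (hsum.mul_left _) (fun n => (continuous_const.mul (continuous_phiPolyDq q a b n)).continuousAt)
    fun n _ hx => norm_mul_phiPolyDq_le hq hC hx n

end Domination

lemma one_sub_pow_ne_zero {q : ℂ} (hq : ‖q‖ < 1) {n : ℕ} (hn : n ≠ 0) : 1 - q ^ n ≠ 0 := by
  intro h
  have hpow : ‖q‖ ^ n = 1 := by rw [← norm_pow, ← sub_eq_zero.1 h, norm_one]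
  exact (pow_lt_one₀ (norm_nonneg q) hq hn).ne hpow

lemma tsum_eq_tsum_succ {f : ℕ → ℂ} (h0 : f 0 = 0) : ∑' n, f n = ∑' n, f (n + 1) := by
  by_cases hf : Summable f
  · rw [hf.tsum_eq_zero_add, h0, zero_add]
  · rw [tsum_eq_zero_of_not_summable hf,
      tsum_eq_zero_of_not_summable (mt (summable_nat_add_iff 1).1 hf)]

section PhiSeries

variable {q : ℝ} {a b c d γ : ℂ}

variable (q a b c d γ) in
def phiCoeff (n : ℕ) : ℂ :=
  pochN q (sP q a b c d * γ) n * pochN q (sP q a b c d / γ) n /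
    (pochN q q n * pochN q (c * q / a) n * pochN q (d * q / a) n)

lemma exists_norm_phiCoeff_le (hq : ‖(q : ℂ)‖ < 1) (hc : ∀ j : ℕ, 1 - c * q / a * q ^ j ≠ 0)
    (hd : ∀ j : ℕ, 1 - d * q / a * q ^ j ≠ 0) :
    ∃ K, ∀ n, ‖phiCoeff q a b c d γ n‖ ≤ K := by
  have hqq : poch q q ≠ 0 := poch_ne_zero hq fun j => by
    simpa [← pow_succ'] using one_sub_pow_ne_zero hq (Nat.succ_ne_zero j)
  have hlim := ((tendsto_pochN hq (sP q a b c d * γ)).mul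
    (tendsto_pochN hq (sP q a b c d / γ))).div
    (((tendsto_pochN hq q).mul (tendsto_pochN hq (c * q / a))).mul (tendsto_pochN hq (d * q / a)))
    (mul_ne_zero (mul_ne_zero hqq (poch_ne_zero hq hc)) (poch_ne_zero hq hd))
  obtain ⟨K, hK⟩ := (Metric.isBounded_range_of_tendsto _ hlim).exists_norm_le
  exact ⟨K, fun n => hK _ ⟨n, rfl⟩⟩

lemma phi_eq_tsum {x : ℂ} (hx : x ≠ 0) :
    phi q a b c d γ x = ∑' n, phiCoeff q a b c d γ n * phiPoly q a b n x := by
  refine tsum_congr fun n => ?_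
  rw [phiCoeff, ← pochN_mul_pow_eq_phiPoly hx]
  ring

lemma Dq_phi_eq_tsum (hq0 : q ≠ 0) (hq : ‖(q : ℂ)‖ < 1) {K : ℝ}
    (hC : ∀ n, ‖phiCoeff q a b c d γ n‖ ≤ K) {x : ℝ} (hx : x ≠ 0) (hbx : ‖b * x‖ ≤ 1 / 2) :
    Dq q (fun t : ℝ => phi q a b c d γ t) x
      = ∑' n, phiCoeff q a b c d γ n * phiPolyDq q a b n x := by
  have hx' : (x : ℂ) ≠ 0 := Complex.ofReal_ne_zero.2 hx
  have hqx' : (q : ℂ) * x ≠ 0 := mul_ne_zero (Complex.ofReal_ne_zero.2 hq0) hx'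
  have hden : (1 - (q : ℂ)) * x ≠ 0 :=
    mul_ne_zero (by simpa using one_sub_pow_ne_zero hq one_ne_zero) hx'
  rw [Dq, Complex.ofReal_mul, phi_eq_tsum hx', phi_eq_tsum hqx',
    ← (summable_mul_phiPoly hq hC hbx).tsum_sub
      (summable_mul_phiPoly hq hC (norm_mul_mul_le_half hq.le hbx)),
    ← tsum_div_const]
  refine tsum_congr fun n => ?_
  rw [← mul_sub, phiPoly_sub_phiPoly, div_eq_iff hden]
  ring

lemma phiZeroVal_eq_tsum :
    phiZeroVal q a b c d γ = ∑' n, phiCoeff q a b c d γ n * phiPoly q a b n 0 := by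
  refine tsum_congr fun n => ?_
  rw [phiCoeff, phiPoly_apply_zero, ← Nat.choose_two_right, choose_succ_two, pow_add]
  ring

lemma phiZeroDer_eq_tsum (hq : ‖(q : ℂ)‖ < 1) :
    phiZeroDer q a b c d γ = ∑' n, phiCoeff q a b c d γ n * phiPolyDq q a b n 0 := by
  rw [tsum_eq_tsum_succ (by rw [phiPolyDq, mul_zero]), phiZeroDer, ← tsum_mul_left]
  refine tsum_congr fun m => ?_
  have hq1 : 1 - (q : ℂ) ≠ 0 := by simpa using one_sub_pow_ne_zero hq one_ne_zero
  have hqm : 1 - (q : ℂ) ^ (m + 1) ≠ 0 := one_sub_pow_ne_zero hq (Nat.succ_ne_zero m)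
  have hQ : phiPolyDq q a b (m + 1) 0
      = b * (-(b / a)) ^ m * (q : ℂ) ^ ((m + 1).choose 2) * (1 - (q : ℂ) ^ (m + 1)) / (1 - q) :=
    eq_div_of_mul_eq hq1 (by rw [mul_comm]; exact one_sub_mul_phiPolyDq_succ_apply_zero _ _ _ m)
  -- `(q;q)_{m+1} = (q;q)_m (1 - q^{m+1})` cancels the factor `1 - q^{m+1}` of `hQ`
  rw [hQ, phiCoeff, pochN_succ', pochN_succ', pochN_succ, pochN_succ', pochN_succ',
    ← Nat.choose_two_right, choose_succ_two, pow_add, ← pow_succ',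
    show (q : ℂ) * (sP q a b c d * γ) = sP q a b c d * q * γ by ring,
    show (q : ℂ) * (sP q a b c d / γ) = sP q a b c d * q / γ by ring,
    show (q : ℂ) * (c * q / a) = c * q ^ 2 / a by ring,
    show (q : ℂ) * (d * q / a) = d * q ^ 2 / a by ring,
    show b * (q : ℂ) / a = b / a * q by ring]
  -- without these abstractions `field_simp` times out
  generalize sP q a b c d = s
  generalize (1 : ℂ) - q ^ (m + 1) = g at hqm ⊢
  generalize c * (q : ℂ) / a = u
  generalize d * (q : ℂ) / a = v
  generalize b / a = t
  field_simp
  ring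

end PhiSeries

lemma one_sub_mul_pow_ne_zero_of_div_ne_zpow {q a c : ℂ} (hc : ∀ k : ℤ, c / a ≠ q ^ k) (j : ℕ) :
    1 - c * q / a * q ^ j ≠ 0 := by
  intro h
  apply hc (-(j + 1 : ℕ))
  rw [zpow_neg, zpow_natCast]
  exact eq_inv_of_mul_eq_one_left (by linear_combination -h)

lemma tendsto_phi_and_Dq_phi {q : ℝ} {a b c d γ : ℂ} (hq0 : q ≠ 0) (hq : ‖(q : ℂ)‖ < 1)
    {K : ℝ} (hC : ∀ n, ‖phiCoeff q a b c d γ n‖ ≤ K) {z : ℝ} (hz : z ≠ 0) :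
    Tendsto (fun k : ℕ => phi q a b c d γ ((z * q ^ k : ℝ) : ℂ)) atTop
      (nhds (phiZeroVal q a b c d γ)) ∧
    Tendsto (fun k : ℕ => Dq q (fun x : ℝ => phi q a b c d γ (x : ℂ)) (z * q ^ k)) atTop
      (nhds (phiZeroDer q a b c d γ)) := by
  have hx : Tendsto (fun k : ℕ => ((z * q ^ k : ℝ) : ℂ)) atTop (nhds 0) := by
    simpa using (tendsto_pow_atTop_nhds_zero_of_norm_lt_one hq).const_mul (z : ℂ)
  have hne (k : ℕ) : z * q ^ k ≠ 0 := mul_ne_zero hz (pow_ne_zero k hq0)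
  constructor
  · rw [phiZeroVal_eq_tsum]
    exact ((continuousAt_tsum_mul_phiPoly hq hC).tendsto.comp hx).congr fun k =>
      (phi_eq_tsum (Complex.ofReal_ne_zero.2 (hne k))).symm
  · rw [phiZeroDer_eq_tsum hq]
    refine ((continuousAt_tsum_mul_phiPolyDq hq hC).tendsto.comp hx).congr' ?_
    filter_upwards [hx.eventually (setOf_norm_mul_le_half_mem_nhds_zero b)] with k hk
    exact (Dq_phi_eq_tsum hq0 hq hC (hne k) hk).symm

theorem statement6_general (q zm zp : ℝ) (a b c d : ℂ)
    (hq0 : 0 < q) (hq1 : q < 1) (hzm : zm < 0) (hzp : 0 < zp)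
    (hPg : memPgen q zm zp a b c d) (γ : ℂ) :
    Tendsto (fun k : ℕ => phi q a b c d γ ((zm * q ^ k : ℝ) : ℂ)) atTop
      (nhds (phiZeroVal q a b c d γ)) ∧
    Tendsto (fun k : ℕ => phi q a b c d γ ((zp * q ^ k : ℝ) : ℂ)) atTop
      (nhds (phiZeroVal q a b c d γ)) ∧
    Tendsto (fun k : ℕ => Dq q (fun x : ℝ => phi q a b c d γ (x : ℂ)) (zm * q ^ k)) atTop
      (nhds (phiZeroDer q a b c d γ)) ∧
    Tendsto (fun k : ℕ => Dq q (fun x : ℝ => phi q a b c d γ (x : ℂ)) (zp * q ^ k)) atTop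
      (nhds (phiZeroDer q a b c d γ)) := by
  have hq : ‖(q : ℂ)‖ < 1 := by rwa [Complex.norm_real, Real.norm_of_nonneg hq0.le]
  obtain ⟨-, -, hgen⟩ := hPg
  obtain ⟨K, hC⟩ := exists_norm_phiCoeff_le (b := b) (γ := γ) hq
    (one_sub_mul_pow_ne_zero_of_div_ne_zpow fun k => (hgen k).1)
    (one_sub_mul_pow_ne_zero_of_div_ne_zpow fun k => (hgen k).2.2.1)
  obtain ⟨hm, hm'⟩ := tendsto_phi_and_Dq_phi hq0.ne' hq hC hzm.ne
  obtain ⟨hp, hp'⟩ := tendsto_phi_and_Dq_phi hq0.ne' hq hC hzp.ne'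
  exact ⟨hm, hp, hm', hp'⟩

/-- `φ_γ` is continuously q-differentiable at the origin, with the
indicated limit values. -/
theorem statement6 (q zm zp : ℝ) (a b c d : ℂ)
    (hq0 : 0 < q) (hq1 : q < 1) (hzm : zm < 0) (hzp : 0 < zp)
    (hPg : memPgen q zm zp a b c d) (γ : ℂ) (hγ : γ ≠ 0) :
    Tendsto (fun k : ℕ => phi q a b c d γ ((zm * q ^ k : ℝ) : ℂ)) atTop
      (nhds (phiZeroVal q a b c d γ)) ∧
    Tendsto (fun k : ℕ => phi q a b c d γ ((zp * q ^ k : ℝ) : ℂ)) atTop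
      (nhds (phiZeroVal q a b c d γ)) ∧
    Tendsto (fun k : ℕ => Dq q (fun x : ℝ => phi q a b c d γ (x : ℂ)) (zm * q ^ k)) atTop
      (nhds (phiZeroDer q a b c d γ)) ∧
    Tendsto (fun k : ℕ => Dq q (fun x : ℝ => phi q a b c d γ (x : ℂ)) (zp * q ^ k)) atTop
      (nhds (phiZeroDer q a b c d γ)) :=
  statement6_general q zm zp a b c d hq0 hq1 hzm hzp hPg γ
end VVBQJ
end
end
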